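/- Let N ∈ ℕ, let W : ℝ^N → [0,∞) be continuous, fix a ∈ ℝ^N, and define φ : ℝ^N → [0,∞) by φ(u) := d_W(a, u). If φ is (Fréchet) differentiable at a point u ∈ ℝ^N, then its gradient satisfies |∇φ(u)| ≤ √(2·W(u)). -/

import Mathlib

/-! Concatenating a near-optimal path from `a` to `u` with the segment `[u, v]` shows
`d_W(a, v) ≤ d_W(a, u) + sup_{[u,v]} √(2W) · |v - u|`. By continuity of `W`, `φ = d_W(a, ·)` is
therefore `(√(2 W(u)) + ε)`-Lipschitz on a small ball around `u`, which bounds `‖Dφ(u)‖`.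
Both pieces are first reparametrized by the smoothstep `3s² - 2s³`, so that their velocities
vanish at the junction and the concatenation stays `C¹`. -/

open MeasureTheory

/-- The geodesic distance induced by a potential `W`:
`d_W(u,v) = inf { ∫₀¹ √(2 W(γ(t))) |γ'(t)| dt : γ ∈ C¹([0,1];ℝ^N), γ(0)=u, γ(1)=v }`. -/
noncomputable def geodDist {N : ℕ} (W : EuclideanSpace ℝ (Fin N) → ℝ)
    (u v : EuclideanSpace ℝ (Fin N)) : ℝ :=
  sInf {r : ℝ | ∃ γ γ' : ℝ → EuclideanSpace ℝ (Fin N),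
    (∀ t ∈ Set.Icc (0 : ℝ) 1, HasDerivAt γ (γ' t) t) ∧
    ContinuousOn γ' (Set.Icc (0 : ℝ) 1) ∧ γ 0 = u ∧ γ 1 = v ∧
    r = ∫ t in (0 : ℝ)..1, Real.sqrt (2 * W (γ t)) * ‖γ' t‖}

open Set intervalIntegral Topology

section ConcatPath

variable {α : Type*} {γ₁ γ₂ : ℝ → α}

noncomputable def concatPath (γ₁ γ₂ : ℝ → α) (t : ℝ) : α :=
  if t ≤ 1 / 2 then γ₁ (2 * t) else γ₂ (2 * t - 1)

theorem concatPath_of_le {t : ℝ} (ht : t ≤ 1 / 2) : concatPath γ₁ γ₂ t = γ₁ (2 * t) :=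
  if_pos ht

theorem concatPath_of_ge (h : γ₁ 1 = γ₂ 0) {t : ℝ} (ht : 1 / 2 ≤ t) :
    concatPath γ₁ γ₂ t = γ₂ (2 * t - 1) := by
  rcases ht.eq_or_lt with rfl | ht
  · norm_num [concatPath, h]
  · exact if_neg (not_le.2 ht)

@[simp] theorem concatPath_zero : concatPath γ₁ γ₂ 0 = γ₁ 0 := by norm_num [concatPath]

@[simp] theorem concatPath_one : concatPath γ₁ γ₂ 1 = γ₂ 1 := by norm_num [concatPath]

theorem ContinuousOn.concatPath [TopologicalSpace α] (h₁ : ContinuousOn γ₁ (Icc 0 1))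
    (h₂ : ContinuousOn γ₂ (Icc 0 1)) (h : γ₁ 1 = γ₂ 0) :
    ContinuousOn (concatPath γ₁ γ₂) (Icc 0 1) := by
  rw [← Icc_union_Icc_eq_Icc (by norm_num : (0 : ℝ) ≤ 1 / 2) (by norm_num : (1 / 2 : ℝ) ≤ 1)]
  refine ContinuousOn.union_of_isClosed ?_ ?_ isClosed_Icc isClosed_Icc
  · refine (h₁.comp (by fun_prop) fun t ht => ⟨?_, ?_⟩).congr fun t ht => concatPath_of_le ht.2
    all_goals linarith [ht.1, ht.2]
  · refine (h₂.comp (by fun_prop) fun t ht => ⟨?_, ?_⟩).congr fun t ht => concatPath_of_ge h ht.1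
    all_goals linarith [ht.1, ht.2]

end ConcatPath

noncomputable def smoothstep (s : ℝ) : ℝ := 3 * s ^ 2 - 2 * s ^ 3

@[simp] theorem smoothstep_zero : smoothstep 0 = 0 := by norm_num [smoothstep]

@[simp] theorem smoothstep_one : smoothstep 1 = 1 := by norm_num [smoothstep]

theorem hasDerivAt_smoothstep (s : ℝ) : HasDerivAt smoothstep (6 * s * (1 - s)) s :=
  (((hasDerivAt_pow 2 s).const_mul 3).sub ((hasDerivAt_pow 3 s).const_mul 2)).congr_deriv
    (by norm_num; ring)

theorem continuous_smoothstep : Continuous smoothstep := by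
  unfold smoothstep
  fun_prop

theorem smoothstep_mem_Icc {s : ℝ} (hs : s ∈ Icc (0 : ℝ) 1) : smoothstep s ∈ Icc (0 : ℝ) 1 := by
  obtain ⟨h0, h1⟩ := hs
  constructor <;> unfold smoothstep
  · nlinarith [mul_nonneg (mul_nonneg h0 h0) (sub_nonneg.2 h1)]
  · nlinarith [mul_nonneg (sq_nonneg (1 - s)) h0]

section Paths

variable {E : Type*} [NormedAddCommGroup E]

noncomputable def weightedLength (w : E → ℝ) (γ γ' : ℝ → E) : ℝ :=
  ∫ t in (0 : ℝ)..1, w (γ t) * ‖γ' t‖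

theorem weightedLength_nonneg {w : E → ℝ} (hw : ∀ x, 0 ≤ w x) {γ γ' : ℝ → E} :
    0 ≤ weightedLength w γ γ' :=
  integral_nonneg zero_le_one fun _ _ => mul_nonneg (hw _) (norm_nonneg _)

variable [NormedSpace ℝ E]

structure IsC1Path (γ γ' : ℝ → E) : Prop where
  hasDerivAt : ∀ t ∈ Icc (0 : ℝ) 1, HasDerivAt γ (γ' t) t
  continuousOn_deriv : ContinuousOn γ' (Icc 0 1)

variable {w : E → ℝ} {γ γ' γ₁ γ₂ γ₁' γ₂' : ℝ → E}

theorem IsC1Path.continuousOn (h : IsC1Path γ γ') : ContinuousOn γ (Icc 0 1) :=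
  fun t ht => (h.hasDerivAt t ht).continuousAt.continuousWithinAt

theorem IsC1Path.intervalIntegrable (hw : Continuous w) (h : IsC1Path γ γ') {a b : ℝ}
    (ha : a ∈ Icc (0 : ℝ) 1) (hb : b ∈ Icc (0 : ℝ) 1) :
    IntervalIntegrable (fun t => w (γ t) * ‖γ' t‖) volume a b :=
  (((hw.comp_continuousOn h.continuousOn).mul h.continuousOn_deriv.norm).mono
    (uIcc_subset_Icc ha hb)).intervalIntegrable

theorem isC1Path_segment (u v : E) : IsC1Path (fun t : ℝ => u + t • (v - u)) fun _ => v - u where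
  hasDerivAt t _ := by simpa using ((hasDerivAt_id t).smul_const (v - u)).const_add u
  continuousOn_deriv := continuousOn_const

theorem weightedLength_segment_le (hw : Continuous w) {u v : E} {C : ℝ}
    (hC : ∀ s ∈ Icc (0 : ℝ) 1, w (u + s • (v - u)) ≤ C) :
    weightedLength w (fun t : ℝ => u + t • (v - u)) (fun _ => v - u) ≤ C * ‖v - u‖ := by
  have h := integral_mono_on zero_le_one
    ((isC1Path_segment u v).intervalIntegrable hw (left_mem_Icc.2 zero_le_one)
      (right_mem_Icc.2 zero_le_one))
    intervalIntegrable_const fun s hs => mul_le_mul_of_nonneg_right (hC s hs) (norm_nonneg _)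
  simpa [weightedLength] using h

theorem IsC1Path.comp_smoothstep (h : IsC1Path γ γ') :
    IsC1Path (γ ∘ smoothstep) fun t => (6 * t * (1 - t)) • γ' (smoothstep t) where
  hasDerivAt t ht := (h.hasDerivAt _ (smoothstep_mem_Icc ht)).scomp t (hasDerivAt_smoothstep t)
  continuousOn_deriv := by
    refine ContinuousOn.smul (by fun_prop) (h.continuousOn_deriv.comp ?_ ?_)
    · exact continuous_smoothstep.continuousOn
    · exact fun t ht => smoothstep_mem_Icc ht

theorem weightedLength_comp_smoothstep (w : E → ℝ) (γ γ' : ℝ → E) :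
    weightedLength w (γ ∘ smoothstep) (fun t => (6 * t * (1 - t)) • γ' (smoothstep t)) =
      weightedLength w γ γ' := by
  have hderiv_nonneg : ∀ t ∈ Icc (0 : ℝ) 1, 0 ≤ 6 * t * (1 - t) := fun t ht => by
    nlinarith [ht.1, ht.2]
  calc weightedLength w (γ ∘ smoothstep) (fun t => (6 * t * (1 - t)) • γ' (smoothstep t))
      = ∫ t in (0 : ℝ)..1,
          (6 * t * (1 - t)) • ((fun s => w (γ s) * ‖γ' s‖) ∘ smoothstep) t := by
        refine integral_congr fun t ht => ?_
        rw [uIcc_of_le zero_le_one] at ht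
        simp only [Function.comp_apply, norm_smul, Real.norm_eq_abs,
          abs_of_nonneg (hderiv_nonneg t ht), smul_eq_mul]
        ring
    _ = weightedLength w γ γ' := by
        rw [integral_deriv_smul_comp_of_deriv_nonneg continuous_smoothstep.continuousOn
          (fun t _ => hasDerivAt_smoothstep t) fun t ht => ?_]
        · simp [weightedLength]
        · simp only [zero_le_one, min_eq_left, max_eq_right] at ht
          exact hderiv_nonneg t (Ioo_subset_Icc_self ht)

theorem IsC1Path.concat (h₁ : IsC1Path γ₁ γ₁') (h₂ : IsC1Path γ₂ γ₂') (h : γ₁ 1 = γ₂ 0)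
    (h₁' : γ₁' 1 = 0) (h₂' : γ₂' 0 = 0) :
    IsC1Path (concatPath γ₁ γ₂) (concatPath ((2 : ℝ) • γ₁') ((2 : ℝ) • γ₂')) where
  hasDerivAt t ht := by
    have h' : ((2 : ℝ) • γ₁') 1 = ((2 : ℝ) • γ₂') 0 := by simp [h₁', h₂']
    have hL : ∀ t ∈ Icc (0 : ℝ) (1 / 2), HasDerivWithinAt (concatPath γ₁ γ₂)
        (concatPath ((2 : ℝ) • γ₁') ((2 : ℝ) • γ₂') t) (Iic (1 / 2)) t := by
      intro t ht
      rw [concatPath_of_le ht.2]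
      have hγ := (h₁.hasDerivAt (2 * t) ⟨by linarith [ht.1], by linarith [ht.2]⟩).scomp t
        ((hasDerivAt_id t).const_mul 2)
      simp only [mul_one] at hγ
      exact hγ.hasDerivWithinAt.congr (fun x hx => concatPath_of_le hx) (concatPath_of_le ht.2)
    have hR : ∀ t ∈ Icc (1 / 2 : ℝ) 1, HasDerivWithinAt (concatPath γ₁ γ₂)
        (concatPath ((2 : ℝ) • γ₁') ((2 : ℝ) • γ₂') t) (Ici (1 / 2)) t := by
      intro t ht
      rw [concatPath_of_ge h' ht.1]
      have hγ := (h₂.hasDerivAt (2 * t - 1) ⟨by linarith [ht.1], by linarith [ht.2]⟩).scomp t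
        (((hasDerivAt_id t).const_mul 2).sub_const 1)
      simp only [mul_one] at hγ
      exact hγ.hasDerivWithinAt.congr (fun x hx => concatPath_of_ge h hx) (concatPath_of_ge h ht.1)
    rcases lt_trichotomy t (1 / 2) with ht' | rfl | ht'
    · exact (hL t ⟨ht.1, ht'.le⟩).hasDerivAt (Iic_mem_nhds ht')
    · have hU := (hL _ ⟨by norm_num, le_rfl⟩).union (hR _ ⟨le_rfl, by norm_num⟩)
      rwa [Iic_union_Ici, hasDerivWithinAt_univ] at hU
    · exact (hR t ⟨ht'.le, ht.2⟩).hasDerivAt (Ici_mem_nhds ht')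
  continuousOn_deriv := (h₁.continuousOn_deriv.const_smul _).concatPath
    (h₂.continuousOn_deriv.const_smul _) (by simp [h₁', h₂'])

theorem weightedLength_concatPath (hw : Continuous w) (h₁ : IsC1Path γ₁ γ₁')
    (h₂ : IsC1Path γ₂ γ₂') (h : γ₁ 1 = γ₂ 0) (h₁' : γ₁' 1 = 0) (h₂' : γ₂' 0 = 0) :
    weightedLength w (concatPath γ₁ γ₂) (concatPath ((2 : ℝ) • γ₁') ((2 : ℝ) • γ₂')) =
      weightedLength w γ₁ γ₁' + weightedLength w γ₂ γ₂' := by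
  have h' : ((2 : ℝ) • γ₁') 1 = ((2 : ℝ) • γ₂') 0 := by simp [h₁', h₂']
  have hc := h₁.concat h₂ h h₁' h₂'
  have hmid : (1 / 2 : ℝ) ∈ Icc (0 : ℝ) 1 := ⟨by norm_num, by norm_num⟩
  unfold weightedLength
  rw [← integral_add_adjacent_intervals (hc.intervalIntegrable hw (left_mem_Icc.2 zero_le_one) hmid)
    (hc.intervalIntegrable hw hmid (right_mem_Icc.2 zero_le_one))]
  congr 1
  · calc _ = (2 : ℝ) • ∫ t in (0 : ℝ)..1 / 2, w (γ₁ (2 * t)) * ‖γ₁' (2 * t)‖ := by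
          rw [← intervalIntegral.integral_smul]
          refine integral_congr fun t ht => ?_
          rw [uIcc_of_le (by norm_num)] at ht
          simp only [concatPath_of_le ht.2, Pi.smul_apply, norm_smul, Real.norm_two, smul_eq_mul]
          ring
      _ = _ := by
          rw [smul_integral_comp_mul_left (fun s => w (γ₁ s) * ‖γ₁' s‖)]
          norm_num
  · calc _ = (2 : ℝ) • ∫ t in (1 / 2 : ℝ)..1, w (γ₂ (2 * t - 1)) * ‖γ₂' (2 * t - 1)‖ := by
          rw [← intervalIntegral.integral_smul]
          refine integral_congr fun t ht => ?_
          rw [uIcc_of_le (by norm_num)] at ht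
          simp only [concatPath_of_ge h ht.1, concatPath_of_ge h' ht.1, Pi.smul_apply, norm_smul,
            Real.norm_two, smul_eq_mul]
          ring
      _ = _ := by
          rw [smul_integral_comp_mul_sub (fun s => w (γ₂ s) * ‖γ₂' s‖)]
          norm_num

end Paths

section GeodDist

variable {N : ℕ} {W : EuclideanSpace ℝ (Fin N) → ℝ}

theorem geodDist_le_weightedLength {γ γ' : ℝ → EuclideanSpace ℝ (Fin N)} (hγ : IsC1Path γ γ') :
    geodDist W (γ 0) (γ 1) ≤ weightedLength (fun x => √(2 * W x)) γ γ' := by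
  refine csInf_le ⟨0, ?_⟩ ⟨γ, γ', hγ.hasDerivAt, hγ.continuousOn_deriv, rfl, rfl, rfl⟩
  rintro _ ⟨γ, γ', -, -, -, -, rfl⟩
  exact weightedLength_nonneg (w := fun x => √(2 * W x)) fun _ => Real.sqrt_nonneg _

theorem exists_weightedLength_lt_geodDist_add (W : EuclideanSpace ℝ (Fin N) → ℝ)
    (u v : EuclideanSpace ℝ (Fin N)) {ε : ℝ} (hε : 0 < ε) :
    ∃ γ γ' : ℝ → EuclideanSpace ℝ (Fin N), IsC1Path γ γ' ∧ γ 0 = u ∧ γ 1 = v ∧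
      weightedLength (fun x => √(2 * W x)) γ γ' < geodDist W u v + ε := by
  by_contra! hge
  have hsegment := isC1Path_segment u v
  have : geodDist W u v + ε ≤ geodDist W u v := by
    refine le_csInf
      ⟨_, _, _, hsegment.hasDerivAt, hsegment.continuousOn_deriv, by simp, by simp, rfl⟩ ?_
    rintro _ ⟨γ, γ', hd, hc, rfl, rfl, rfl⟩
    exact hge γ γ' ⟨hd, hc⟩ rfl rfl
  linarith

theorem geodDist_le_geodDist_add (hW : Continuous W) (a : EuclideanSpace ℝ (Fin N))
    {u v : EuclideanSpace ℝ (Fin N)} {C : ℝ}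
    (hC : ∀ s ∈ Icc (0 : ℝ) 1, √(2 * W (u + s • (v - u))) ≤ C) :
    geodDist W a v ≤ geodDist W a u + C * ‖v - u‖ := by
  have hw : Continuous fun x => √(2 * W x) := by fun_prop
  refine le_of_forall_pos_le_add fun ε hε => ?_
  obtain ⟨η, η', hη, hη0, hη1, hlt⟩ := exists_weightedLength_lt_geodDist_add W a u hε
  have hsegment := isC1Path_segment u v
  have hpath := hη.comp_smoothstep.concat hsegment.comp_smoothstep (by simp [hη1]) (by simp)
    (by simp)
  have hle := geodDist_le_weightedLength (W := W) hpath
  have hsegment_length := weightedLength_comp_smoothstep (fun x => √(2 * W x))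
    (fun t => u + t • (v - u)) fun _ => v - u
  beta_reduce at hsegment_length
  rw [weightedLength_concatPath hw hη.comp_smoothstep hsegment.comp_smoothstep (by simp [hη1])
    (by simp) (by simp), weightedLength_comp_smoothstep, hsegment_length] at hle
  simp only [concatPath_zero, concatPath_one, Function.comp_apply, smoothstep_zero, smoothstep_one,
    hη0, one_smul, add_sub_cancel] at hle
  linarith [weightedLength_segment_le hw hC]

theorem abs_geodDist_sub_le (hW : Continuous W) (a : EuclideanSpace ℝ (Fin N))
    {s : Set (EuclideanSpace ℝ (Fin N))} (hs : Convex ℝ s) {C : ℝ} (hC : ∀ x ∈ s, √(2 * W x) ≤ C)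
    {u v : EuclideanSpace ℝ (Fin N)} (hu : u ∈ s) (hv : v ∈ s) :
    |geodDist W a v - geodDist W a u| ≤ C * ‖v - u‖ := by
  have huv := geodDist_le_geodDist_add hW a fun t ht => hC _ (hs.add_smul_sub_mem hu hv ht)
  have hvu := geodDist_le_geodDist_add hW a fun t ht => hC _ (hs.add_smul_sub_mem hv hu ht)
  rw [norm_sub_rev] at hvu
  exact abs_sub_le_iff.2 ⟨by linarith, by linarith⟩

end GeodDist

theorem norm_gradient_geodDistFun_le_general {N : ℕ}
    (W : EuclideanSpace ℝ (Fin N) → ℝ) (hWc : Continuous W)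
    (a : EuclideanSpace ℝ (Fin N)) (φ : EuclideanSpace ℝ (Fin N) → ℝ)
    (hφ : ∀ u, φ u = geodDist W a u)
    (u : EuclideanSpace ℝ (Fin N)) (hdiff : DifferentiableAt ℝ φ u) :
    ‖gradient φ u‖ ≤ Real.sqrt (2 * W u) := by
  rw [← (InnerProductSpace.toDual ℝ _).norm_map, toDual_gradient]
  refine le_of_forall_pos_le_add fun ε hε => hdiff.hasFDerivAt.le_of_lip' (by positivity) ?_
  have hnear : ∀ᶠ x in 𝓝 u, √(2 * W x) < √(2 * W u) + ε :=
    (by fun_prop : Continuous fun x => √(2 * W x)).continuousAt.eventually_lt continuousAt_const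
      (lt_add_of_pos_right _ hε)
  obtain ⟨δ, hδ, hball⟩ := Metric.eventually_nhds_iff_ball.1 hnear
  filter_upwards [Metric.ball_mem_nhds u hδ] with v hv
  rw [hφ, hφ, Real.norm_eq_abs]
  exact abs_geodDist_sub_le hWc a (convex_ball u δ) (fun x hx => (hball x hx).le)
    (Metric.mem_ball_self hδ) hv

/-- **Gradient bound for the geodesic distance function** `φ = d_W(a, ·)`:
at every point of differentiability, `|∇φ(u)| ≤ √(2 W(u))`. -/
theorem norm_gradient_geodDistFun_le {N : ℕ}
    (W : EuclideanSpace ℝ (Fin N) → ℝ) (hWc : Continuous W) (hWnn : ∀ u, 0 ≤ W u)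
    (a : EuclideanSpace ℝ (Fin N)) (φ : EuclideanSpace ℝ (Fin N) → ℝ)
    (hφ : ∀ u, φ u = geodDist W a u)
    (u : EuclideanSpace ℝ (Fin N)) (hdiff : DifferentiableAt ℝ φ u) :
    ‖gradient φ u‖ ≤ Real.sqrt (2 * W u) :=
  norm_gradient_geodDistFun_le_general W hWc a φ hφ u hdiff
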